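/- arXiv:1901.08060 — 4 statements merged into one kernel-verified Lean document; each statement's English description precedes it below -/
import Mathlib

section
/- Let m ≥ 1 be a positive integer, p a positive integer coprime to 4m+2, γ, λ, δ real numbers. Define t_j = 1 + γ + iλ cos(2π p j/(4m+2) + δ) for j = 1,…,4m+2. Then |t_1 t_3 ⋯ t_{4m+1}| = |t_2 t_4 ⋯ t_{4m+2}|, i.e., the product of |t_j| over odd j equals the product over even j. -/
/-!
Shifting `j` by `2m + 1 = q / 2` moves the phase by `pπ`, which at most flips the sign of the
cosine, i.e. conjugates `t j`; so `‖t j‖` has period `2m + 1`. As this period is odd, the shift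
sends odd indices to even ones: `‖t (2j + 1)‖ = ‖t (2(j + m) + 2)‖`, and a product over a full
period is invariant under the cyclic reindexing `j ↦ j + m`.
-/

open Real Complex Finset Function

theorem Function.Periodic.prod_range_comp_add {M : Type*} [CommMonoid M] {g : ℕ → M} {N : ℕ}
    (hg : Periodic g N) (k : ℕ) : ∏ j ∈ range N, g (j + k) = ∏ j ∈ range N, g j := by
  induction k with
  | zero => rfl
  | succ k ih =>
    rw [← ih]
    cases N with
    | zero => rfl
    | succ n =>
      calc ∏ j ∈ range (n + 1), g (j + (k + 1))
          = (∏ j ∈ range n, g (j + 1 + k)) * g (n + 1 + k) := by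
            simp only [prod_range_succ, add_right_comm _ 1 k, add_assoc]
        _ = (∏ j ∈ range n, g (j + 1 + k)) * g (0 + k) := by
            rw [zero_add, add_comm (n + 1) k, hg k]
        _ = ∏ j ∈ range (n + 1), g (j + k) := (prod_range_succ' (fun j => g (j + k)) n).symm

theorem Function.Periodic.prod_range_odd_eq_prod_range_even {M : Type*} [CommMonoid M]
    {f : ℕ → M} {k : ℕ} (hf : Periodic f (2 * k + 1)) :
    ∏ j ∈ range (2 * k + 1), f (2 * j + 1) = ∏ j ∈ range (2 * k + 1), f (2 * j + 2) := by
  have heven : Periodic (fun j => f (2 * j + 2)) (2 * k + 1) := fun j => by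
    dsimp only
    rw [show 2 * (j + (2 * k + 1)) + 2 = 2 * j + 2 + (2 * k + 1) + (2 * k + 1) by ring, hf, hf]
  calc ∏ j ∈ range (2 * k + 1), f (2 * j + 1)
      = ∏ j ∈ range (2 * k + 1), f (2 * (j + k) + 2) := prod_congr rfl fun j _ => by
        rw [← hf, show 2 * j + 1 + (2 * k + 1) = 2 * (j + k) + 2 by ring]
    _ = ∏ j ∈ range (2 * k + 1), f (2 * j + 2) := heven.prod_range_comp_add k

theorem Complex.norm_ofReal_add_I_mul_neg (a b c : ℝ) :
    ‖(a : ℂ) + I * b * ↑(-c)‖ = ‖(a : ℂ) + I * b * c‖ := by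
  rw [← Complex.norm_conj]
  simp

theorem abs_prod_odd_eq_abs_prod_even_q_4m_plus_2_general (m p : ℕ) (γ lam δ : ℝ)
    (t : ℕ → ℂ)
    (ht : ∀ j : ℕ, t j =
      (1 + γ : ℂ) + Complex.I * lam * Real.cos (2 * π * p * j / (4 * m + 2) + δ)) :
    ∏ j ∈ Finset.range (2 * m + 1), ‖t (2 * j + 1)‖ =
    ∏ j ∈ Finset.range (2 * m + 1), ‖t (2 * j + 2)‖ := by
  have hper : Periodic (fun n => ‖t n‖) (2 * m + 1) := fun n => by
    have hangle : 2 * π * p * ((n + (2 * m + 1) : ℕ) : ℝ) / (4 * m + 2) + δ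
        = 2 * π * p * n / (4 * m + 2) + δ + p * π := by
      field_simp
      push_cast
      ring
    simp only [ht, hangle, cos_add_nat_mul_pi]
    rcases neg_one_pow_eq_or ℝ p with h | h
    · rw [h, one_mul]
    · rw [h, neg_one_mul, ← ofReal_one, ← ofReal_add, Complex.norm_ofReal_add_I_mul_neg]
  exact hper.prod_range_odd_eq_prod_range_even

/-- For `q = 4m+2` and `t j = 1 + γ + iλ cos(2π p j / (4m+2) + δ)`, the product of
`|t j|` over odd `j = 1,3,…,4m+1` equals the product over even `j = 2,4,…,4m+2`. -/
theorem abs_prod_odd_eq_abs_prod_even_q_4m_plus_2 (m p : ℕ) (hm : 1 ≤ m) (hp : 0 < p)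
    (hcop : Nat.Coprime p (4 * m + 2)) (γ lam δ : ℝ)
    (t : ℕ → ℂ)
    (ht : ∀ j : ℕ, t j =
      (1 + γ : ℂ) + Complex.I * lam * Real.cos (2 * π * p * j / (4 * m + 2) + δ)) :
    ∏ j ∈ Finset.range (2 * m + 1), ‖t (2 * j + 1)‖ =
    ∏ j ∈ Finset.range (2 * m + 1), ‖t (2 * j + 2)‖ :=
  abs_prod_odd_eq_abs_prod_even_q_4m_plus_2_general m p γ lam δ t ht
end

section
/- Let m ≥ 1 and p be coprime positive integers with p odd, and λ ≠ 0 real. Suppose δ ∈ ℝ satisfies: for all real λ, ∏_{j=1}^{m}[1 + λ² cos²(pπ(2j−1)/(2m) + δ)] = ∏_{j=1}^{m}[1 + λ² cos²(pπ·2j/(2m) + δ)]. Then there exist integers n, j_1, j_2 with 1 ≤ j_1, j_2 ≤ m such that δ = [n/2 − p(2(j_1+j_2)−1)/(4m)]π. -/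
open Real Finset

/-- In the Hermitian case `γ = 0` with period `q = 4m`, if
`∏_{j=1}^m [1 + λ² cos²(pπ(2j−1)/(2m) + δ)] = ∏_{j=1}^m [1 + λ² cos²(pπ·2j/(2m) + δ)]`
for all real `λ`, then `δ = [n/2 − p(2(j₁+j₂)−1)/(4m)]π` for some integers `n, j₁, j₂` with
`1 ≤ j₁, j₂ ≤ m`. -/
theorem gap_closing_delta_characterization (m p : ℕ) (hm : 1 ≤ m) (hp : 0 < p)
    (hodd : Odd p) (hcop : Nat.Coprime p m) (δ : ℝ)
    (h : ∀ lam : ℝ,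
      ∏ j ∈ Finset.range m,
          (1 + lam ^ 2 * Real.cos ((p : ℝ) * π * (2 * (j : ℝ) + 1) / (2 * m) + δ) ^ 2) =
      ∏ j ∈ Finset.range m,
          (1 + lam ^ 2 * Real.cos ((p : ℝ) * π * (2 * (j : ℝ) + 2) / (2 * m) + δ) ^ 2)) :
    ∃ (n : ℤ) (j₁ j₂ : ℕ), 1 ≤ j₁ ∧ j₁ ≤ m ∧ 1 ≤ j₂ ∧ j₂ ≤ m ∧
      δ = ((n : ℝ) / 2 - (p : ℝ) * (2 * ((j₁ : ℝ) + (j₂ : ℝ)) - 1) / (4 * m)) * π := by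
  have hm0 : (0 : ℝ) < (m : ℝ) := by exact_mod_cast hm
  have hmne : (m : ℝ) ≠ 0 := ne_of_gt hm0
  set a : ℕ → ℝ := fun j => Real.cos ((p : ℝ) * π * (2 * (j : ℝ) + 1) / (2 * m) + δ) ^ 2 with ha
  set b : ℕ → ℝ := fun j => Real.cos ((p : ℝ) * π * (2 * (j : ℝ) + 2) / (2 * m) + δ) ^ 2 with hb
  have ha0 : ∀ j, 0 ≤ a j := fun j => sq_nonneg _
  have hb0 : ∀ j, 0 ≤ b j := fun j => sq_nonneg _
  -- Step 1: polynomial identity, valid for all real x (not just x = λ² ≥ 0)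
  have key : ∀ x : ℝ,
      ∏ j ∈ Finset.range m, (1 + x * a j) = ∏ j ∈ Finset.range m, (1 + x * b j) := by
    set P : Polynomial ℝ :=
      ∏ j ∈ Finset.range m, (1 + Polynomial.C (a j) * Polynomial.X) with hP
    set Q : Polynomial ℝ :=
      ∏ j ∈ Finset.range m, (1 + Polynomial.C (b j) * Polynomial.X) with hQ
    have hPe : ∀ x : ℝ, P.eval x = ∏ j ∈ Finset.range m, (1 + x * a j) := by
      intro x
      rw [hP, Polynomial.eval_prod]
      exact Finset.prod_congr rfl fun j _ => by
        rw [Polynomial.eval_add, Polynomial.eval_one, Polynomial.eval_mul,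
          Polynomial.eval_C, Polynomial.eval_X]; ring
    have hQe : ∀ x : ℝ, Q.eval x = ∏ j ∈ Finset.range m, (1 + x * b j) := by
      intro x
      rw [hQ, Polynomial.eval_prod]
      exact Finset.prod_congr rfl fun j _ => by
        rw [Polynomial.eval_add, Polynomial.eval_one, Polynomial.eval_mul,
          Polynomial.eval_C, Polynomial.eval_X]; ring
    have hPQ : P = Q := by
      have hroot : Set.Ici (0 : ℝ) ⊆ { x | (P - Q).IsRoot x } := by
        intro x hx
        have hx' : x = (Real.sqrt x) ^ 2 := (Real.sq_sqrt hx).symm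
        simp only [Set.mem_setOf_eq, Polynomial.IsRoot, Polynomial.eval_sub, sub_eq_zero]
        rw [hPe, hQe, hx']
        exact h (Real.sqrt x)
      have h0 := Polynomial.eq_zero_of_infinite_isRoot (P - Q)
        ((Set.Ici_infinite (0 : ℝ)).mono hroot)
      exact sub_eq_zero.mp h0
    intro x
    rw [← hPe, ← hQe, hPQ]
  -- Step 2: the maxima of a and b agree
  have hne : (Finset.range m).Nonempty := ⟨0, Finset.mem_range.mpr hm⟩
  obtain ⟨i₁, hi₁, hmax₁⟩ := Finset.exists_max_image (Finset.range m) a hne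
  obtain ⟨i₂, hi₂, hmax₂⟩ := Finset.exists_max_image (Finset.range m) b hne
  have hab : a i₁ = b i₂ := by
    rcases lt_trichotomy (a i₁) (b i₂) with hlt | heq | hgt
    · -- b i₂ > a i₁ ≥ 0, evaluate at x = -(b i₂)⁻¹
      exfalso
      have hB : 0 < b i₂ := lt_of_le_of_lt (ha0 i₁) hlt
      have := key (-(b i₂)⁻¹)
      have hR0 : ∏ j ∈ Finset.range m, (1 + -(b i₂)⁻¹ * b j) = 0 :=
        Finset.prod_eq_zero hi₂ (by field_simp; norm_num)
      have hL0 : 0 < ∏ j ∈ Finset.range m, (1 + -(b i₂)⁻¹ * a j) := by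
        apply Finset.prod_pos
        intro j hj
        have h1 : a j ≤ a i₁ := hmax₁ j hj
        have h2 : a j < b i₂ := lt_of_le_of_lt h1 hlt
        have : (b i₂)⁻¹ * a j < 1 := by
          rw [inv_mul_lt_iff₀ hB, mul_one]; exact h2
        linarith
      rw [this] at hL0
      exact lt_irrefl _ (hR0 ▸ hL0)
    · exact heq
    · exfalso
      have hA : 0 < a i₁ := lt_of_le_of_lt (hb0 i₂) hgt
      have := key (-(a i₁)⁻¹)
      have hL0 : ∏ j ∈ Finset.range m, (1 + -(a i₁)⁻¹ * a j) = 0 :=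
        Finset.prod_eq_zero hi₁ (by field_simp; norm_num)
      have hR0 : 0 < ∏ j ∈ Finset.range m, (1 + -(a i₁)⁻¹ * b j) := by
        apply Finset.prod_pos
        intro j hj
        have h1 : b j ≤ b i₂ := hmax₂ j hj
        have h2 : b j < a i₁ := lt_of_le_of_lt h1 hgt
        have : (a i₁)⁻¹ * b j < 1 := by
          rw [inv_mul_lt_iff₀ hA, mul_one]; exact h2
        linarith
      rw [this] at hL0
      exact lt_irrefl _ (hL0 ▸ hR0)
  -- Step 3: trig analysis
  set α : ℝ := (p : ℝ) * π * (2 * (i₁ : ℝ) + 1) / (2 * m) + δ with hα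
  set β : ℝ := (p : ℝ) * π * (2 * (i₂ : ℝ) + 2) / (2 * m) + δ with hβ
  have hcos2 : Real.cos (2 * α) = Real.cos (2 * β) := by
    have h1 : Real.cos α ^ 2 = Real.cos β ^ 2 := hab
    have h2 := Real.cos_sq α
    have h3 := Real.cos_sq β
    linarith
  have hzero : Real.sin (α + β) = 0 ∨ Real.sin (α - β) = 0 := by
    have h0 : Real.cos (2 * α) - Real.cos (2 * β) = 0 := by linarith
    rw [Real.cos_sub_cos] at h0
    have hαβ : (2 * α + 2 * β) / 2 = α + β := by ring
    have hαβ' : (2 * α - 2 * β) / 2 = α - β := by ring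
    rw [hαβ, hαβ'] at h0
    rcases mul_eq_zero.mp h0 with h1 | h1
    · rcases mul_eq_zero.mp h1 with h2 | h2
      · norm_num at h2
      · exact Or.inl h2
    · exact Or.inr h1
  rcases hzero with hsum | hdiff
  · -- sin(α+β) = 0 gives the conclusion
    obtain ⟨k, hk⟩ := Real.sin_eq_zero_iff.mp hsum
    refine ⟨k, i₁ + 1, i₂ + 1, Nat.le_add_left 1 i₁,
      Nat.succ_le_of_lt (Finset.mem_range.mp hi₁), Nat.le_add_left 1 i₂,
      Nat.succ_le_of_lt (Finset.mem_range.mp hi₂), ?_⟩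
    rw [hα, hβ] at hk
    push_cast
    field_simp at hk ⊢
    linarith
  · -- sin(α-β) = 0 is impossible by parity
    exfalso
    obtain ⟨k, hk⟩ := Real.sin_eq_zero_iff.mp hdiff
    rw [hα, hβ] at hk
    have hπ : (π : ℝ) ≠ 0 := Real.pi_ne_zero
    have hr : (k : ℝ) * (2 * m) = (p : ℝ) * (2 * i₁ + 1) - (p : ℝ) * (2 * i₂ + 2) := by
      field_simp at hk
      have := hk
      nlinarith [Real.pi_pos, sq_nonneg π]
    have hz : (k : ℤ) * (2 * m) = (p : ℤ) * (2 * i₁ + 1) - (p : ℤ) * (2 * i₂ + 2) := by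
      exact_mod_cast hr
    obtain ⟨r, hr'⟩ := hodd
    have hoddZ : Odd ((p : ℤ) * (2 * i₁ + 1) - (p : ℤ) * (2 * i₂ + 2)) := by
      refine ⟨(p : ℤ) * (i₁ : ℤ) - (p : ℤ) * (i₂ : ℤ) - (r : ℤ) - 1, ?_⟩
      have : (p : ℤ) = 2 * r + 1 := by exact_mod_cast hr'
      rw [this]; ring
    rw [← hz] at hoddZ
    exact (Int.not_odd_iff_even.mpr ⟨(k : ℤ) * m, by ring⟩) hoddZ
end

section
/- Let q ≥ 2 and t_1,…,t_q, t_1',…,t_q' be nonzero complex numbers. For the q×q matrix H(β) with entries H(β)_{j,j+1} = t_j, H(β)_{j+1,j} = t_j' for 1 ≤ j ≤ q−1, H(β)_{1,q} = t_q' β^{−1}, H(β)_{q,1} = t_q β, and zeros elsewhere, the characteristic equation det(E·I − H(β)) = 0, viewed as an equation in β for fixed E, is quadratic and its two roots β_1, β_2 satisfy β_1 β_2 = (t_1' t_2' ⋯ t_q')/(t_1 t_2 ⋯ t_q). -/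
/-!
Write `E - H(β)` as the open-chain matrix `M = E - H_open`, with its first row shifted by
`-β⁻¹ t_q' e_q` and its last row by `-β t_q e_1`. Multilinearity of the determinant in these two
rows gives `det (E - H(β)) = c - β a - β⁻¹ b`, where `c` does not depend on `β` (the cross term
carries the factor `β⁻¹ β = 1`) and `a`, `b` are the determinants of `M` with its last, resp. first,
row replaced by the single corner entry. Expanding along that row leaves a triangular minor with
diagonal `-t_j`, resp. `-t_j'`, so `a = ∏ t_j` and `b = ∏ t_j'`. After multiplying by `β`, the
roots are those of the quadratic `a β² - c β + b`, whose product is `b / a`.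
-/

open Finset Matrix

theorem Finset.prod_Icc_one_eq_prod_fin {M : Type*} [CommMonoid M] (f : ℕ → M) (n : ℕ) :
    ∏ j ∈ Icc 1 n, f j = ∏ i : Fin n, f (i + 1) := by
  induction n with
  | zero => simp
  | succ n ih => rw [prod_Icc_succ_top (by omega), ih, Fin.prod_univ_castSucc]; simp

theorem mul_mul_eq_of_sub_mul_sub_inv_mul_eq_zero {K : Type*} [Field K] {a b c x y : K}
    (hx : x ≠ 0) (hy : y ≠ 0) (hxy : x ≠ y)
    (hx' : c - x * a - x⁻¹ * b = 0) (hy' : c - y * a - y⁻¹ * b = 0) : a * (x * y) = b := by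
  have hx'' : x * c - x ^ 2 * a - b = 0 := by linear_combination x * hx' + b * mul_inv_cancel₀ hx
  have hy'' : y * c - y ^ 2 * a - b = 0 := by linear_combination y * hy' + b * mul_inv_cancel₀ hy
  have key : (x - y) * (a * (x * y) - b) = 0 := by linear_combination x * hy'' - y * hx''
  exact sub_eq_zero.mp ((mul_eq_zero.mp key).resolve_left (sub_ne_zero.mpr hxy))

section UpdateRow

variable {R n : Type*} [CommRing R] [Fintype n] [DecidableEq n]

theorem Matrix.det_updateRow_self_add_smul (M : Matrix n n R) (i : n) (x : R) (u : n → R) :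
    (M.updateRow i (M i + x • u)).det = M.det + x * (M.updateRow i u).det := by
  rw [det_updateRow_add, det_updateRow_smul, updateRow_eq_self]

theorem Matrix.det_updateRow_self_add_smul_updateRow_self_add_smul (M : Matrix n n R) {i j : n}
    (hij : i ≠ j) (x y : R) (u v : n → R) :
    ((M.updateRow i (M i + x • u)).updateRow j (M j + y • v)).det =
      M.det + x * (M.updateRow i u).det + y * (M.updateRow j v).det +
        x * y * ((M.updateRow i u).updateRow j v).det :=
  calc ((M.updateRow i (M i + x • u)).updateRow j (M j + y • v)).det
      = ((M.updateRow j (M j + y • v)).updateRow i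
          ((M.updateRow j (M j + y • v)) i + x • u)).det := by
        rw [updateRow_comm _ hij, updateRow_ne hij]
    _ = (M.updateRow j (M j + y • v)).det +
          x * ((M.updateRow i u).updateRow j ((M.updateRow i u) j + y • v)).det := by
        rw [det_updateRow_self_add_smul, updateRow_comm _ hij.symm, updateRow_ne hij.symm]
    _ = _ := by
        rw [det_updateRow_self_add_smul, det_updateRow_self_add_smul]
        ring

end UpdateRow

theorem Matrix.det_updateRow_single_fin {R : Type*} [CommRing R] {n : ℕ}
    (A : Matrix (Fin (n + 1)) (Fin (n + 1)) R) (i k : Fin (n + 1)) (c : R) :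
    (A.updateRow i (Pi.single k c)).det =
      (-1) ^ (i + k : ℕ) * c * (A.submatrix i.succAbove k.succAbove).det := by
  rw [show Pi.single k c = c • Pi.single k (1 : R) by rw [← Pi.single_smul, smul_eq_mul, mul_one],
    det_updateRow_smul, ← adjugate_apply, adjugate_fin_succ_eq_det_submatrix]
  ring

section OpenChain

variable {R : Type*} [CommRing R]

def openChainHamiltonian (t t' : ℕ → R) (m : ℕ) : Matrix (Fin m) (Fin m) R :=
  of fun i j => (if (j : ℕ) = i + 1 then t (i + 1) else 0) +
    (if (i : ℕ) = j + 1 then t' (j + 1) else 0)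

theorem smul_one_sub_openChainHamiltonian_apply (E : R) (t t' : ℕ → R) {m : ℕ} (i j : Fin m) :
    (E • 1 - openChainHamiltonian t t' m) i j =
      (if (i : ℕ) = j then E else 0) - (if (j : ℕ) = i + 1 then t (i + 1) else 0) -
        (if (i : ℕ) = j + 1 then t' (j + 1) else 0) := by
  simp [openChainHamiltonian, one_apply, Fin.ext_iff, sub_sub]

theorem det_submatrix_castSucc_succ_openChain (E : R) (t t' : ℕ → R) (n : ℕ) :
    ((E • 1 - openChainHamiltonian t t' (n + 1)).submatrix Fin.castSucc Fin.succ).det =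
      ∏ i : Fin n, -t (i + 1) := by
  rw [det_of_isLowerTriangular]
  · refine prod_congr rfl fun i _ => ?_
    simp only [submatrix_apply, smul_one_sub_openChainHamiltonian_apply, Fin.val_castSucc,
      Fin.val_succ]
    grind
  · intro i j (hij : (i : ℕ) < j)
    simp only [submatrix_apply, smul_one_sub_openChainHamiltonian_apply, Fin.val_castSucc,
      Fin.val_succ]
    grind

theorem det_submatrix_succ_castSucc_openChain (E : R) (t t' : ℕ → R) (n : ℕ) :
    ((E • 1 - openChainHamiltonian t t' (n + 1)).submatrix Fin.succ Fin.castSucc).det =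
      ∏ i : Fin n, -t' (i + 1) := by
  rw [det_of_isUpperTriangular]
  · refine prod_congr rfl fun i _ => ?_
    simp only [submatrix_apply, smul_one_sub_openChainHamiltonian_apply, Fin.val_castSucc,
      Fin.val_succ]
    grind
  · intro i j (hij : (j : ℕ) < i)
    simp only [submatrix_apply, smul_one_sub_openChainHamiltonian_apply, Fin.val_castSucc,
      Fin.val_succ]
    grind

theorem det_updateRow_last_openChain (E : R) (t t' : ℕ → R) (n : ℕ) :
    ((E • 1 - openChainHamiltonian t t' (n + 1)).updateRow (Fin.last n)
      (Pi.single 0 (t (n + 1)))).det = ∏ i : Fin (n + 1), t (i + 1) := by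
  rw [det_updateRow_single_fin, Fin.succAbove_last, Fin.succAbove_zero,
    det_submatrix_castSucc_succ_openChain, prod_neg, card_univ, Fintype.card_fin,
    Fin.prod_univ_castSucc]
  simp only [Fin.val_last, Fin.val_zero, Fin.val_castSucc, add_zero]
  linear_combination (t (n + 1) * ∏ i : Fin n, t (i + 1)) *
    pow_mul_pow_eq_one n (show (-1 : R) * -1 = 1 by ring)

theorem det_updateRow_zero_openChain (E : R) (t t' : ℕ → R) (n : ℕ) :
    ((E • 1 - openChainHamiltonian t t' (n + 1)).updateRow 0
      (Pi.single (Fin.last n) (t' (n + 1)))).det = ∏ i : Fin (n + 1), t' (i + 1) := by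
  rw [det_updateRow_single_fin, Fin.succAbove_last, Fin.succAbove_zero,
    det_submatrix_succ_castSucc_openChain, prod_neg, card_univ, Fintype.card_fin,
    Fin.prod_univ_castSucc]
  simp only [Fin.val_last, Fin.val_zero, Fin.val_castSucc, zero_add]
  linear_combination (t' (n + 1) * ∏ i : Fin n, t' (i + 1)) *
    pow_mul_pow_eq_one n (show (-1 : R) * -1 = 1 by ring)

end OpenChain

section NonBloch

variable {K : Type*} [Field K]

def nonBlochHamiltonian (t t' : ℕ → K) (q : ℕ) (β : K) : Matrix (Fin q) (Fin q) K :=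
  of fun i j =>
    (if (j : ℕ) = (i : ℕ) + 1 then t ((i : ℕ) + 1) else 0) +
    (if (i : ℕ) = (j : ℕ) + 1 then t' ((j : ℕ) + 1) else 0) +
    (if (i : ℕ) = 0 ∧ (j : ℕ) = q - 1 then t' q * β⁻¹ else 0) +
    (if (i : ℕ) = q - 1 ∧ (j : ℕ) = 0 then t q * β else 0)

theorem smul_one_sub_nonBlochHamiltonian_eq_updateRow (E β : K) (t t' : ℕ → K) {n : ℕ}
    (hn : n ≠ 0) :
    E • 1 - nonBlochHamiltonian t t' (n + 1) β =
      (((E • 1 - openChainHamiltonian t t' (n + 1)).updateRow 0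
        ((E • 1 - openChainHamiltonian t t' (n + 1)) 0 +
          (-β⁻¹) • Pi.single (Fin.last n) (t' (n + 1)))).updateRow (Fin.last n)
        ((E • 1 - openChainHamiltonian t t' (n + 1)) (Fin.last n) +
          (-β) • Pi.single 0 (t (n + 1)))) := by
  ext i j
  simp only [updateRow_apply, nonBlochHamiltonian, openChainHamiltonian, Matrix.sub_apply,
    Matrix.smul_apply, one_apply, of_apply, Pi.add_apply, Pi.smul_apply, Pi.single_apply,
    Fin.ext_iff, Fin.val_last, Fin.val_zero, smul_eq_mul]
  grind

theorem exists_det_smul_one_sub_nonBlochHamiltonian_eq (E : K) (t t' : ℕ → K) {n : ℕ}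
    (hn : n ≠ 0) :
    ∃ c : K, ∀ β ≠ 0, (E • 1 - nonBlochHamiltonian t t' (n + 1) β).det =
      c - β * ∏ i : Fin (n + 1), t (i + 1) - β⁻¹ * ∏ i : Fin (n + 1), t' (i + 1) := by
  set M := E • 1 - openChainHamiltonian t t' (n + 1)
  have h0 : (0 : Fin (n + 1)) ≠ Fin.last n := by simp [Fin.ext_iff, Ne.symm hn]
  set D := ((M.updateRow 0 (Pi.single (Fin.last n) (t' (n + 1)))).updateRow (Fin.last n)
    (Pi.single 0 (t (n + 1)))).det
  refine ⟨M.det + D, fun β hβ => ?_⟩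
  rw [smul_one_sub_nonBlochHamiltonian_eq_updateRow E β t t' hn,
    det_updateRow_self_add_smul_updateRow_self_add_smul M h0, det_updateRow_last_openChain,
    det_updateRow_zero_openChain]
  linear_combination D * inv_mul_cancel₀ hβ

end NonBloch

theorem product_of_non_Bloch_roots_general (q : ℕ) (hq : 2 ≤ q) (t t' : ℕ → ℂ)
    (ht : ∀ j, 1 ≤ j → j ≤ q → t j ≠ 0)
    (H : ℂ → Matrix (Fin q) (Fin q) ℂ)
    (hH : ∀ β : ℂ, ∀ i j : Fin q, H β i j =
      (if (j : ℕ) = (i : ℕ) + 1 then t ((i : ℕ) + 1) else 0) +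
      (if (i : ℕ) = (j : ℕ) + 1 then t' ((j : ℕ) + 1) else 0) +
      (if (i : ℕ) = 0 ∧ (j : ℕ) = q - 1 then t' q * β⁻¹ else 0) +
      (if (i : ℕ) = q - 1 ∧ (j : ℕ) = 0 then t q * β else 0))
    (E β₁ β₂ : ℂ) (hβ₁ : β₁ ≠ 0) (hβ₂ : β₂ ≠ 0) (hne : β₁ ≠ β₂)
    (hroot₁ : Matrix.det (E • (1 : Matrix (Fin q) (Fin q) ℂ) - H β₁) = 0)
    (hroot₂ : Matrix.det (E • (1 : Matrix (Fin q) (Fin q) ℂ) - H β₂) = 0) :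
    β₁ * β₂ = (∏ j ∈ Finset.Icc 1 q, t' j) / (∏ j ∈ Finset.Icc 1 q, t j) := by
  obtain ⟨n, rfl⟩ : ∃ n, q = n + 1 := ⟨q - 1, by omega⟩
  obtain rfl : H = nonBlochHamiltonian t t' (n + 1) := funext fun β => Matrix.ext (hH β)
  obtain ⟨c, hc⟩ := exists_det_smul_one_sub_nonBlochHamiltonian_eq E t t' (n := n) (by omega)
  rw [hc β₁ hβ₁] at hroot₁
  rw [hc β₂ hβ₂] at hroot₂
  have hprod : ∏ i : Fin (n + 1), t (i + 1) ≠ 0 :=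
    prod_ne_zero_iff.mpr fun i _ => ht _ (by omega) (by omega)
  rw [prod_Icc_one_eq_prod_fin, prod_Icc_one_eq_prod_fin, eq_div_iff hprod, mul_comm]
  exact mul_mul_eq_of_sub_mul_sub_inv_mul_eq_zero hβ₁ hβ₂ hne hroot₁ hroot₂

/-- For the generalized Bloch Hamiltonian `H(β)` of the non-Hermitian AAH chain,
the equation `det(E·I − H(β)) = 0` in `β` has its two roots `β₁, β₂` satisfying
`β₁ β₂ = (t₁' ⋯ t_q')/(t₁ ⋯ t_q)`. -/
theorem product_of_non_Bloch_roots (q : ℕ) (hq : 2 ≤ q) (t t' : ℕ → ℂ)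
    (ht : ∀ j, 1 ≤ j → j ≤ q → t j ≠ 0) (ht' : ∀ j, 1 ≤ j → j ≤ q → t' j ≠ 0)
    (H : ℂ → Matrix (Fin q) (Fin q) ℂ)
    (hH : ∀ β : ℂ, ∀ i j : Fin q, H β i j =
      (if (j : ℕ) = (i : ℕ) + 1 then t ((i : ℕ) + 1) else 0) +
      (if (i : ℕ) = (j : ℕ) + 1 then t' ((j : ℕ) + 1) else 0) +
      (if (i : ℕ) = 0 ∧ (j : ℕ) = q - 1 then t' q * β⁻¹ else 0) +
      (if (i : ℕ) = q - 1 ∧ (j : ℕ) = 0 then t q * β else 0))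
    (E β₁ β₂ : ℂ) (hβ₁ : β₁ ≠ 0) (hβ₂ : β₂ ≠ 0) (hne : β₁ ≠ β₂)
    (hroot₁ : Matrix.det (E • (1 : Matrix (Fin q) (Fin q) ℂ) - H β₁) = 0)
    (hroot₂ : Matrix.det (E • (1 : Matrix (Fin q) (Fin q) ℂ) - H β₂) = 0) :
    β₁ * β₂ = (∏ j ∈ Finset.Icc 1 q, t' j) / (∏ j ∈ Finset.Icc 1 q, t j) :=
  product_of_non_Bloch_roots_general q hq t t' ht H hH E β₁ β₂ hβ₁ hβ₂ hne hroot₁ hroot₂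
end

section
/- Let m ≥ 1 and p be an integer with gcd(p, 2m) such that p is a unit mod 2m. The map j ↦ cos²(pπ(2j−1)/(2m) + δ) for j = 1,…,m and the map j ↦ cos²(pπ·2j/(2m) + δ) for j = 1,…,m give multisets that coincide when δ = (2n+1)π/(4m) for any integer n; consequently ∏_{j=1}^m [c + λ² cos²(pπ(2j−1)/(2m)+δ)] = ∏_{j=1}^m [c + λ² cos²(pπ·2j/(2m)+δ)] for every real c and λ. -/
/-!
For `0 ≤ j, k < m` write `x_j = pπ(2j+1)/(2m) + δ` and `y_k = pπ(2k+2)/(2m) + δ`. Since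
`cos² x = cos² y` whenever `x + y ∈ πℤ`, it suffices to pair every `j` with a `k` such that
`x_j + y_k = π (p(2j+2k+3) + 2n+1)/(2m)` lies in `πℤ`. As `p` is an odd unit modulo `2m`, there is
`T` with `2m ∣ p(2T+3) + 2n+1`, and then any `j + k ≡ T (mod m)` works. The reflection
`j ↦ (T - j) mod m` is an involution of `{0, …, m-1}`, so it matches the two multisets.
-/

open Real Finset

lemma cos_sq_eq_cos_sq_of_add_eq_int_mul_pi {x y : ℝ} {k : ℤ} (h : x + y = k * π) :
    cos x ^ 2 = cos y ^ 2 := by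
  obtain rfl : y = k * π - x := by linarith
  rw [cos_sq, cos_sq, show 2 * ((k : ℝ) * π - x) = k * (2 * π) - 2 * x by ring,
    cos_int_mul_two_pi_sub]

lemma Finset.val_map_eq_of_involution {α β : Type*} {s : Finset α} {f g : α → β} (σ : α → α)
    (hσ : ∀ a ∈ s, σ a ∈ s) (hσσ : ∀ a ∈ s, σ (σ a) = a) (h : ∀ a ∈ s, f a = g (σ a)) :
    s.val.map f = s.val.map g :=
  Multiset.map_eq_map_of_bij_of_nodup f g s.nodup s.nodup (fun a _ => σ a) hσ
    (fun a₁ ha₁ a₂ ha₂ h₁₂ => by rw [← hσσ a₁ ha₁, ← hσσ a₂ ha₂, h₁₂])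
    (fun b hb => ⟨σ b, hσ b hb, hσσ b hb⟩) h

def reflectMod (m : ℕ) (T : ℤ) (j : ℕ) : ℕ := ((T - j) % m).toNat

section reflectMod

variable {m : ℕ} {T : ℤ} {j : ℕ}

lemma natCast_reflectMod (hm : 0 < m) : (reflectMod m T j : ℤ) = (T - j) % m :=
  Int.toNat_of_nonneg (Int.emod_nonneg _ (by omega))

lemma reflectMod_lt (hm : 0 < m) : reflectMod m T j < m := by
  have := Int.emod_lt_of_pos (T - j) (by omega : (0 : ℤ) < m)
  rw [← natCast_reflectMod hm] at this
  omega

lemma reflectMod_reflectMod (hm : 0 < m) (hj : j < m) :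
    reflectMod m T (reflectMod m T j) = j := by
  have : ((reflectMod m T (reflectMod m T j) : ℕ) : ℤ) = j := by
    rw [natCast_reflectMod hm, natCast_reflectMod hm, Int.sub_emod, Int.emod_emod_of_dvd _ dvd_rfl,
      ← Int.sub_emod, sub_sub_cancel]
    exact Int.emod_eq_of_lt (by positivity) (by omega)
  exact_mod_cast this

lemma dvd_add_reflectMod_sub (hm : 0 < m) : (m : ℤ) ∣ j + reflectMod m T j - T := by
  rw [natCast_reflectMod hm, Int.emod_def]
  exact ⟨-((T - j) / m), by ring⟩

end reflectMod

lemma exists_two_mul_dvd_mul_add {m p : ℕ} (hp : p.Coprime (2 * m)) (n : ℤ) :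
    ∃ T : ℤ, 2 * (m : ℤ) ∣ p * (2 * T + 3) + (2 * n + 1) := by
  obtain ⟨q, v, hqv⟩ : IsCoprime (p : ℤ) (2 * m) := by
    rw [Int.isCoprime_iff_gcd_eq_one]; exact_mod_cast hp
  have hq : Odd q := (Int.odd_mul.mp (show Odd (q * p) from ⟨-(m * v), by linear_combination hqv⟩)).1
  obtain ⟨r, rfl⟩ := hq
  -- `2T + 3 = -q(2n+1)`, with `q` the inverse of `p` modulo `2m`
  refine ⟨-(2 * r * n + r + n + 2), v * (2 * n + 1), ?_⟩
  linear_combination (-(2 * n + 1)) * hqv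

lemma cos_sq_odd_eq_cos_sq_even {m p : ℕ} (hm : m ≠ 0) {n : ℤ} {j k : ℕ} {N : ℤ}
    (hN : p * (2 * (j : ℤ) + 2 * k + 3) + (2 * n + 1) = 2 * m * N) :
    cos (p * π * (2 * (j : ℝ) + 1) / (2 * m) + (2 * n + 1) * π / (4 * m)) ^ 2 =
      cos (p * π * (2 * (k : ℝ) + 2) / (2 * m) + (2 * n + 1) * π / (4 * m)) ^ 2 := by
  have hNℝ : (p : ℝ) * (2 * j + 2 * k + 3) + (2 * n + 1) = 2 * m * N := by exact_mod_cast hN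
  apply cos_sq_eq_cos_sq_of_add_eq_int_mul_pi (k := N)
  field_simp
  linear_combination 4 * hNℝ

/-- For `δ = (2n+1)π/(4m)` and `p` a unit mod `2m`, the multiset of values
`cos²(pπ(2j−1)/(2m) + δ)`, `j = 1,…,m`, coincides with the multiset of values
`cos²(pπ·2j/(2m) + δ)`, `j = 1,…,m`; consequently
`∏_{j=1}^m [c + λ² cos²(pπ(2j−1)/(2m)+δ)] = ∏_{j=1}^m [c + λ² cos²(pπ·2j/(2m)+δ)]`
for all real `c`, `λ`. -/
theorem cos_sq_multisets_coincide (m : ℕ) (hm : 1 ≤ m) (p : ℕ) (hp : Nat.Coprime p (2 * m))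
    (n : ℤ) (δ : ℝ) (hδ : δ = (2 * (n : ℝ) + 1) * π / (4 * m)) :
    ((Finset.range m).val.map fun j =>
        Real.cos ((p : ℝ) * π * (2 * (j : ℝ) + 1) / (2 * m) + δ) ^ 2) =
      ((Finset.range m).val.map fun j =>
        Real.cos ((p : ℝ) * π * (2 * (j : ℝ) + 2) / (2 * m) + δ) ^ 2) ∧
    ∀ c lam : ℝ,
      ∏ j ∈ Finset.range m,
          (c + lam ^ 2 * Real.cos ((p : ℝ) * π * (2 * (j : ℝ) + 1) / (2 * m) + δ) ^ 2) =
      ∏ j ∈ Finset.range m,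
          (c + lam ^ 2 * Real.cos ((p : ℝ) * π * (2 * (j : ℝ) + 2) / (2 * m) + δ) ^ 2) := by
  obtain ⟨T, N, hT⟩ := exists_two_mul_dvd_mul_add hp n
  have hpair : ∀ j ∈ range m,
      cos (p * π * (2 * (j : ℝ) + 1) / (2 * m) + δ) ^ 2 =
        cos (p * π * (2 * ((reflectMod m T j : ℕ) : ℝ) + 2) / (2 * m) + δ) ^ 2 := by
    intro j _
    obtain ⟨e, he⟩ := dvd_add_reflectMod_sub (T := T) (j := j) hm
    subst hδ
    exact cos_sq_odd_eq_cos_sq_even (by omega) (N := N + p * e)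
      (by linear_combination hT + 2 * (p : ℤ) * he)
  have hmultiset := Finset.val_map_eq_of_involution
    (g := fun k : ℕ => cos (p * π * (2 * (k : ℝ) + 2) / (2 * m) + δ) ^ 2) (reflectMod m T)
    (fun j _ => mem_range.mpr (reflectMod_lt hm))
    (fun j hj => reflectMod_reflectMod hm (mem_range.mp hj)) hpair
  -- in the first conjunct `j : ℝ`, so its multisets are images of `(range m).val` cast to `ℝ`
  refine ⟨by simpa only [Multiset.pure_def, Multiset.bind_def, Multiset.bind_singleton,
    Multiset.map_map, Function.comp_def] using hmultiset, fun c lam => ?_⟩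
  have := congrArg (fun t => (t.map (c + lam ^ 2 * ·)).prod) hmultiset
  simpa only [Multiset.map_map, Function.comp_def, prod_map_val] using this
end
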